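/- arXiv:2202.01766 — 6 statements merged into one kernel-verified Lean document; each statement's English description precedes it below -/
import Mathlib

section
/- Let $A$ be a unital complex Banach $\star$-algebra with unit $1$, $X$ a complex Banach space, $z \in A$ fixed, and $\phi : A \times A \to X$ a continuous bilinear map such that $\phi(a, b^\star) = \phi(z, 1)$ whenever $a b^\star = z$. Then $\phi(za, 1) = \phi(z, a)$ for all $a \in A$. -/
/-!
Every unit `u` factors `z = (z * u) * u⁻¹` with `u⁻¹ = star (star u⁻¹)`, so `φ (z * u) u⁻¹ = φ z 1`
for all units `u`. Along the curve `u = 1 + t • a` of units near `1`, the left side is therefore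
constant, and its derivative at `t = 0` is `φ (z * a) 1 - φ z a`.
-/

open Filter Topology

section

variable {𝕜 R X : Type*} [NontriviallyNormedField 𝕜] [NormedRing R] [HasSummableGeomSeries R]
  [NormedAlgebra 𝕜 R] [NormedAddCommGroup X] [NormedSpace 𝕜 X]

omit [HasSummableGeomSeries R] in
theorem hasDerivAt_one_add_smul (a : R) : HasDerivAt (fun t : 𝕜 => 1 + t • a) a 0 := by
  simpa using ((hasDerivAt_id (0 : 𝕜)).smul_const a).const_add 1

theorem hasDerivAt_ringInverse_one_add_smul (a : R) :
    HasDerivAt (fun t : 𝕜 => Ring.inverse (1 + t • a)) (-a) 0 := by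
  have hinv : HasFDerivAt (Ring.inverse : R → R) (-ContinuousLinearMap.mulLeftRight 𝕜 R 1 1)
      (1 + (0 : 𝕜) • a) := by
    simpa using hasFDerivAt_ringInverse (𝕜 := 𝕜) (1 : Rˣ)
  simpa [Function.comp_def] using hinv.comp_hasDerivAt 0 (hasDerivAt_one_add_smul a)

theorem eventually_isUnit_one_add_smul (a : R) :
    ∀ᶠ t in 𝓝 (0 : 𝕜), IsUnit (1 + t • a) := by
  have hline : Tendsto (fun t : 𝕜 => 1 + t • a) (𝓝 0) (𝓝 1) := by
    simpa using (hasDerivAt_one_add_smul (𝕜 := 𝕜) a).continuousAt.tendsto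
  exact hline.eventually_mem (Units.nhds (1 : Rˣ))

theorem apply_mul_one_eq_of_apply_mul_inverse_eq {z : R} {φ : R →L[𝕜] R →L[𝕜] X}
    (hφ : ∀ u : Rˣ, φ (z * u) ↑u⁻¹ = φ z 1) (a : R) : φ (z * a) 1 = φ z a := by
  set g : 𝕜 → X := fun t => φ (z * (1 + t • a)) (Ring.inverse (1 + t • a))
  have hderiv : HasDerivAt g (φ (z * a) 1 - φ z a) 0 := by
    have hleft : HasDerivAt (fun t : 𝕜 => φ (z * (1 + t • a))) (φ (z * a)) 0 :=
      φ.hasFDerivAt.comp_hasDerivAt 0 ((hasDerivAt_one_add_smul a).const_mul z)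
    simpa [sub_eq_add_neg] using hleft.clm_apply (hasDerivAt_ringInverse_one_add_smul a)
  have hconst : g =ᶠ[𝓝 0] fun _ => φ z 1 := by
    filter_upwards [eventually_isUnit_one_add_smul a] with t ⟨u, hu⟩
    simp only [g, ← hu, Ring.inverse_unit, hφ]
  simpa [sub_eq_zero] using
    hderiv.unique ((hasDerivAt_const 0 (φ z 1)).congr_of_eventuallyEq hconst)

end

theorem stmt_2_general (A X : Type*) [NormedRing A] [NormedAlgebra ℂ A] [CompleteSpace A]
    [StarRing A]
    [NormedAddCommGroup X] [NormedSpace ℂ X]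
    (z : A) (φ : A →L[ℂ] A →L[ℂ] X)
    (h : ∀ a b : A, a * star b = z → φ a (star b) = φ z 1) :
    ∀ a : A, φ (z * a) 1 = φ z a := by
  refine apply_mul_one_eq_of_apply_mul_inverse_eq fun u => ?_
  simpa using h (z * u) (star ↑u⁻¹) (by simp [mul_assoc])

theorem stmt_2 (A X : Type*) [NormedRing A] [NormedAlgebra ℂ A] [CompleteSpace A]
    [StarRing A] [StarModule ℂ A] [ContinuousStar A]
    [NormedAddCommGroup X] [NormedSpace ℂ X] [CompleteSpace X]
    (z : A) (φ : A →L[ℂ] A →L[ℂ] X)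
    (h : ∀ a b : A, a * star b = z → φ a (star b) = φ z 1) :
    ∀ a : A, φ (z * a) 1 = φ z a :=
  stmt_2_general A X z φ h
end

section
/- Let $A$ be a unital complex Banach $\star$-algebra with unit $1$, $X$ a complex Banach space, $z \in A$ fixed, and $\phi : A \times A \to X$ a continuous bilinear map such that $\phi(a, b^\star) = \phi(z, 1)$ whenever $a b^\star = z$. Then $\phi(za, a) = \phi(za^2, 1)$ for all $a \in A$. -/
/-!
Since `z * exp (t • b) * exp (-t • b) = z`, the map `t ↦ φ (z * exp (t • b)) (exp (-t • b))` is
constant. Its first derivative at `0` gives `φ (z * b) 1 = φ z b`; its second derivative at `0`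
gives `φ (z * b ^ 2) 1 - 2 φ (z * b) b + φ z (b ^ 2) = 0`. Combining the two, the latter with
`b ^ 2` in place of `b`, yields `φ (z * b) b = φ (z * b ^ 2) 1`.
-/

open NormedSpace

section

variable {A X : Type*} [NormedRing A] [NormedAlgebra ℂ A] [NormedAddCommGroup X] [NormedSpace ℂ X]

noncomputable def twist (φ : A →L[ℂ] A →L[ℂ] X) (b : A) : A →L[ℂ] A →L[ℂ] X :=
  φ.bilinearComp ((ContinuousLinearMap.mul ℂ A).flip b) (ContinuousLinearMap.id ℂ A) -
    φ.bilinearComp (ContinuousLinearMap.id ℂ A) (ContinuousLinearMap.mul ℂ A b)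

@[simp]
lemma twist_apply (φ : A →L[ℂ] A →L[ℂ] X) (b x y : A) :
    twist φ b x y = φ (x * b) y - φ x (b * y) := rfl

variable [CompleteSpace A]

lemma exp_smul_mul_exp_smul_neg (b : A) (t : ℂ) : exp (t • b) * exp (t • -b) = 1 := by
  let : NormedAlgebra ℚ A := .restrictScalars ℚ ℂ A
  rw [smul_neg, ← exp_add_of_commute (Commute.refl _).neg_right, add_neg_cancel, exp_zero]

lemma hasDerivAt_apply_mul_exp_smul (φ : A →L[ℂ] A →L[ℂ] X) (z b : A) (t : ℂ) :
    HasDerivAt (fun s : ℂ => φ (z * exp (s • b)) (exp (s • -b)))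
      (twist φ b (z * exp (t • b)) (exp (t • -b))) t := by
  have hleft := φ.hasFDerivAt.comp_hasDerivAt t ((hasDerivAt_exp_smul_const b t).const_mul z)
  have hright := hasDerivAt_exp_smul_const' (-b) t
  refine (hleft.clm_apply hright).congr_deriv ?_
  simp only [twist_apply, Function.comp_apply, neg_mul, map_neg, mul_assoc, sub_eq_add_neg]

lemma twist_apply_mul_exp_smul_eq_zero {φ : A →L[ℂ] A →L[ℂ] X} {z b : A}
    (hconst : ∀ t : ℂ, φ (z * exp (t • b)) (exp (t • -b)) = φ z 1) (t : ℂ) :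
    twist φ b (z * exp (t • b)) (exp (t • -b)) = 0 := by
  have hderiv := hasDerivAt_apply_mul_exp_smul φ z b t
  rw [funext hconst] at hderiv
  exact hderiv.unique (hasDerivAt_const t _)

end

theorem stmt_3_general (A X : Type*) [NormedRing A] [NormedAlgebra ℂ A] [CompleteSpace A]
    [StarRing A] [NormedAddCommGroup X] [NormedSpace ℂ X]
    (z : A) (φ : A →L[ℂ] A →L[ℂ] X)
    (h : ∀ a b : A, a * star b = z → φ a (star b) = φ z 1) :
    ∀ a : A, φ (z * a) a = φ (z * a ^ 2) 1 := by
  have hconst (b : A) (t : ℂ) : φ (z * exp (t • b)) (exp (t • -b)) = φ z 1 := by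
    simpa using h _ (star (exp (t • -b)))
      (by rw [star_star, mul_assoc, exp_smul_mul_exp_smul_neg, mul_one])
  have hfirst (b : A) (t : ℂ) : twist φ b (z * exp (t • b)) (exp (t • -b)) = 0 := twist_apply_mul_exp_smul_eq_zero (hconst b) t
  have hsecond (b : A) : twist (twist φ b) b z 1 = 0 := by
    simpa using twist_apply_mul_exp_smul_eq_zero (φ := twist φ b) (z := z) (b := b)
      (fun t => by simpa using (hfirst b t).trans (hfirst b 0).symm) 0
  intro a
  have hfirst_sq := hfirst (a * a) 0
  have hsecond_a := hsecond a
  simp only [twist_apply, zero_smul, exp_zero, mul_one, mul_assoc] at hfirst_sq hsecond_a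
  rw [pow_two]
  linear_combination (norm := module) (-(2:ℂ)⁻¹) • (hfirst_sq + hsecond_a)

theorem stmt_3 (A X : Type*) [NormedRing A] [NormedAlgebra ℂ A] [CompleteSpace A]
    [StarRing A] [StarModule ℂ A] [ContinuousStar A]
    [NormedAddCommGroup X] [NormedSpace ℂ X] [CompleteSpace X]
    (z : A) (φ : A →L[ℂ] A →L[ℂ] X)
    (h : ∀ a b : A, a * star b = z → φ a (star b) = φ z 1) :
    ∀ a : A, φ (z * a) a = φ (z * a ^ 2) 1 :=
  stmt_3_general A X z φ h
end

section
/- Let $A$ be a unital complex Banach $\star$-algebra with unit $1$, $X$ a complex Banach space, $z \in A$ fixed, and $\phi : A \times A \to X$ a continuous bilinear map such that $\phi(a, b^\star) = \phi(z, 1)$ whenever $a b^\star = z$. Then there exists a continuous linear map $\Phi : A \to X$ such that $\phi(za, b) + \phi(zb, a) = \Phi(ab + ba)$ for all $a, b \in A$. Moreover one may take $\Phi(a) = \phi(za, 1)$. -/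
/-!
If `x * y = z` forces `ψ x y = ψ z 1`, then for every `a` the function
`t ↦ ψ (z * exp (-t a)) (exp (t a))` is constant. Its derivative is
`ψ' (x, y) = ψ (x, y a) - ψ (x a, y)` evaluated along the same curve, so this curve is also a level
curve of `ψ'`, and then of `ψ''`. Evaluating at `t = 0`, the first derivative gives
`ψ (z, c) = ψ (z c, 1)` and the second `ψ (z a, a) = ψ (z a², 1)`; polarizing the latter gives the
Jordan identity.
-/

open NormedSpace

namespace ContinuousLinearMap

variable {𝕂 A X : Type*} [RCLike 𝕂] [NormedRing A] [NormedAlgebra 𝕂 A]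
  [NormedAddCommGroup X] [NormedSpace 𝕂 X]

theorem apply_mul_add_apply_mul_eq_of_forall_apply_mul_self (ψ : A →L[𝕂] A →L[𝕂] X) (z : A)
    (hψ : ∀ a, ψ (z * a) a = ψ (z * (a * a)) 1) (a b : A) :
    ψ (z * a) b + ψ (z * b) a = ψ (z * (a * b + b * a)) 1 := by
  have hab := hψ (a + b)
  simp only [add_mul, mul_add, map_add, add_apply, hψ a, hψ b] at hab
  rw [mul_add, map_add, add_apply]
  linear_combination (norm := abel) hab

variable (𝕂) in
noncomputable def shiftRight (a : A) (ψ : A →L[𝕂] A →L[𝕂] X) : A →L[𝕂] A →L[𝕂] X :=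
  ψ.bilinearComp (.id 𝕂 A) ((mul 𝕂 A).flip a) - ψ.bilinearComp ((mul 𝕂 A).flip a) (.id 𝕂 A)

@[simp]
theorem shiftRight_apply (a : A) (ψ : A →L[𝕂] A →L[𝕂] X) (x y : A) :
    shiftRight 𝕂 a ψ x y = ψ x (y * a) - ψ (x * a) y :=
  rfl

theorem apply_mul_self_eq_of_shiftRight {ψ : A →L[𝕂] A →L[𝕂] X} {z : A}
    (h₁ : ∀ c, shiftRight 𝕂 c ψ z 1 = 0) (a : A)
    (h₂ : shiftRight 𝕂 a (shiftRight 𝕂 a ψ) z 1 = 0) :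
    ψ (z * a) a = ψ (z * (a * a)) 1 := by
  have hc (c : A) : ψ z c = ψ (z * c) 1 := by simpa [sub_eq_zero] using h₁ c
  simp only [shiftRight_apply, one_mul, hc (a * a), mul_assoc] at h₂
  refine smul_right_injective X (two_ne_zero (α := 𝕂)) ?_
  simp only [two_smul]
  linear_combination (norm := abel) -h₂

variable [CompleteSpace A]

theorem mul_exp_neg_smul_mul_exp_smul (z a : A) (t : 𝕂) : z * exp (-(t • a)) * exp (t • a) = z := by
  let _ : NormedAlgebra ℚ A := NormedAlgebra.restrictScalars ℚ 𝕂 A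
  rw [mul_assoc, ← exp_add_of_commute (Commute.refl _).neg_left, neg_add_cancel, exp_zero,
    mul_one]

def ConstOnExpCurve (ψ : A →L[𝕂] A →L[𝕂] X) (z a : A) : Prop :=
  ∀ t : 𝕂, ψ (z * exp (-(t • a))) (exp (t • a)) = ψ z 1

theorem constOnExpCurve_of_forall_mul_eq {ψ : A →L[𝕂] A →L[𝕂] X} {z : A}
    (h : ∀ x y, x * y = z → ψ x y = ψ z 1) (a : A) : ConstOnExpCurve ψ z a :=
  fun t => h _ _ (mul_exp_neg_smul_mul_exp_smul z a t)

theorem hasDerivAt_apply_expCurve (ψ : A →L[𝕂] A →L[𝕂] X) (z a : A) (s : 𝕂) :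
    HasDerivAt (fun t : 𝕂 => ψ (z * exp (-(t • a))) (exp (t • a)))
      (shiftRight 𝕂 a ψ (z * exp (-(s • a))) (exp (s • a))) s := by
  have hexp := hasDerivAt_exp_smul_const (𝕂 := 𝕂) a
  have hexpNeg : HasDerivAt (fun t : 𝕂 => exp (-(t • a))) (-(exp (-(s • a)) * a)) s := by
    simpa [Function.comp_def, neg_smul] using (hexp (-s)).scomp s (hasDerivAt_neg s)
  refine ((ψ.hasFDerivAt.comp_hasDerivAt s (hexpNeg.const_mul z)).clm_apply (hexp s)).congr_deriv ?_
  simp only [shiftRight_apply, Function.comp_apply, mul_neg, map_neg, neg_apply, mul_assoc]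
  abel

namespace ConstOnExpCurve

variable {ψ : A →L[𝕂] A →L[𝕂] X} {z a : A}

theorem shiftRight_apply_expCurve (h : ConstOnExpCurve ψ z a) (s : 𝕂) :
    shiftRight 𝕂 a ψ (z * exp (-(s • a))) (exp (s • a)) = 0 :=
  (hasDerivAt_apply_expCurve ψ z a s).unique <| by
    simpa only [funext h] using hasDerivAt_const s (ψ z 1)

theorem shiftRight_apply_one (h : ConstOnExpCurve ψ z a) : shiftRight 𝕂 a ψ z 1 = 0 := by
  simpa using h.shiftRight_apply_expCurve 0

theorem shiftRight (h : ConstOnExpCurve ψ z a) : ConstOnExpCurve (shiftRight 𝕂 a ψ) z a :=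
  fun t => by rw [h.shiftRight_apply_expCurve, h.shiftRight_apply_one]

end ConstOnExpCurve

theorem apply_mul_self_eq_of_forall_mul_eq {ψ : A →L[𝕂] A →L[𝕂] X} {z : A}
    (h : ∀ x y, x * y = z → ψ x y = ψ z 1) (a : A) : ψ (z * a) a = ψ (z * (a * a)) 1 :=
  have hconst := constOnExpCurve_of_forall_mul_eq h
  apply_mul_self_eq_of_shiftRight (fun c => (hconst c).shiftRight_apply_one) a
    (hconst a).shiftRight.shiftRight_apply_one

end ContinuousLinearMap

theorem stmt_4_general (A X : Type*) [NormedRing A] [NormedAlgebra ℂ A] [CompleteSpace A]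
    [StarRing A]
    [NormedAddCommGroup X] [NormedSpace ℂ X]
    (z : A) (φ : A →L[ℂ] A →L[ℂ] X)
    (h : ∀ a b : A, a * star b = z → φ a (star b) = φ z 1) :
    ∃ Φ : A →L[ℂ] X, (∀ a : A, Φ a = φ (z * a) 1) ∧
      ∀ a b : A, φ (z * a) b + φ (z * b) a = Φ (a * b + b * a) := by
  have hz (x y : A) (hxy : x * y = z) : φ x y = φ z 1 := by
    simpa using h x (star y) (by simpa using hxy)
  exact ⟨(φ.flip 1).comp (.mul ℂ A z), fun _ => rfl,
    φ.apply_mul_add_apply_mul_eq_of_forall_apply_mul_self z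
      (φ.apply_mul_self_eq_of_forall_mul_eq hz)⟩

theorem stmt_4 (A X : Type*) [NormedRing A] [NormedAlgebra ℂ A] [CompleteSpace A]
    [StarRing A] [StarModule ℂ A] [ContinuousStar A]
    [NormedAddCommGroup X] [NormedSpace ℂ X] [CompleteSpace X]
    (z : A) (φ : A →L[ℂ] A →L[ℂ] X)
    (h : ∀ a b : A, a * star b = z → φ a (star b) = φ z 1) :
    ∃ Φ : A →L[ℂ] X, (∀ a : A, Φ a = φ (z * a) 1) ∧
      ∀ a b : A, φ (z * a) b + φ (z * b) a = Φ (a * b + b * a) :=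
  stmt_4_general A X z φ h
end

section
/- Let $A$ be a unital complex Banach $\star$-algebra, $X$ a complex Banach space, $z \in A$ fixed, and $\phi : A \times A \to X$ a continuous bilinear map such that $\phi(a^\star, b) = \phi(z, 1)$ whenever $a^\star b = z$. Then $\phi(za, a) = \phi(za^2, 1)$ and $\phi(za, 1) = \phi(z, a)$ for all $a \in A$, and there exists a continuous linear map $\Phi : A \to X$ with $\phi(za, b) + \phi(zb, a) = \Phi(ab + ba)$ for all $a, b \in A$. -/
open Filter Topology

theorem stmt_5 (A X : Type*) [NormedRing A] [NormedAlgebra ℂ A] [CompleteSpace A]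
    [StarRing A] [StarModule ℂ A] [ContinuousStar A]
    [NormedAddCommGroup X] [NormedSpace ℂ X] [CompleteSpace X]
    (z : A) (φ : A →L[ℂ] A →L[ℂ] X)
    (h : ∀ a b : A, star a * b = z → φ (star a) b = φ z 1) :
    (∀ a : A, φ (z * a) a = φ (z * a ^ 2) 1) ∧
    (∀ a : A, φ (z * a) 1 = φ z a) ∧
    ∃ Φ : A →L[ℂ] X, ∀ a b : A, φ (z * a) b + φ (z * b) a = Φ (a * b + b * a) := by
  have hinv : ∀ (v : A), IsUnit v → φ (z * Ring.inverse v) v = φ z 1 := by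
    intro v hv
    have := h (star (z * Ring.inverse v)) v ?_
    · rwa [star_star] at this
    · rw [star_star, mul_assoc, Ring.inverse_mul_cancel v hv, mul_one]
  -- For each a, basic setup
  have key : ∀ a : A, φ z a = φ (z * a) 1 ∧ φ (z * a) a = φ (z * a ^ 2) 1 := by
    intro a
    set w : ℂ → A := fun t => Ring.inverse (1 + t • a) with hwdef
    have hw0 : Tendsto w (𝓝 0) (𝓝 1) := by
      have h1 : ContinuousAt (fun t : ℂ => 1 + t • a) 0 := by fun_prop
      have h2 : ContinuousAt (Ring.inverse : A → A) ((1 : Aˣ) : A) :=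
        NormedRing.inverse_continuousAt 1
      have h3 : ContinuousAt (fun t : ℂ => Ring.inverse (1 + t • a)) 0 := by
        have h2' : ContinuousAt (Ring.inverse : A → A) ((fun t : ℂ => 1 + t • a) 0) := by
          simpa using h2
        exact ContinuousAt.comp (f := fun t : ℂ => 1 + t • a) h2' h1
      have : w 0 = 1 := by simp [hwdef, Ring.inverse_one]
      simpa [this] using h3.tendsto
    have hu : ∀ᶠ t : ℂ in 𝓝 0, IsUnit (1 + t • a) := by
      have : ∀ᶠ t : ℂ in 𝓝 0, ‖-(t • a)‖ < 1 := by
        have hc : ContinuousAt (fun t : ℂ => ‖-(t • a)‖) 0 := by fun_prop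
        have h0 : Tendsto (fun t : ℂ => ‖-(t • a)‖) (𝓝 0) (𝓝 0) := by
          simpa using hc.tendsto
        exact h0 (Iio_mem_nhds one_pos)
      filter_upwards [this] with t ht
      have := (Units.oneSub (-(t • a)) ht).isUnit
      simpa [sub_neg_eq_add] using this
    -- the fundamental eventual identity
    have hfund : ∀ᶠ t : ℂ in 𝓝[≠] 0,
        φ z a = φ (z * a * w t) 1 + t • φ (z * a * w t) a := by
      filter_upwards [nhdsWithin_le_nhds hu, self_mem_nhdsWithin] with t ht (ht0 : t ≠ 0)
      have hbase : φ (z * w t) (1 + t • a) = φ z 1 := hinv _ ht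
      have hw1 : w t = 1 - t • (a * w t) := by
        have h1 : (1 + t • a) * w t = 1 := Ring.mul_inverse_cancel _ ht
        have : w t + t • (a * w t) = 1 := by
          rw [← h1]; rw [add_mul, one_mul, smul_mul_assoc]
        linear_combination (norm := module) this
      have hzw : ∀ x : A, φ (z * w t) x = φ z x - t • φ (z * (a * w t)) x := by
        intro x
        conv_lhs => rw [hw1]
        rw [mul_sub, mul_one, mul_smul_comm, map_sub, map_smul]
        simp
      have hexp : φ (z * w t) 1 + t • φ (z * w t) a = φ z 1 := by
        rw [← hbase, map_add, map_smul]
      rw [hzw, hzw] at hexp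
      have hmul : z * (a * w t) = z * a * w t := by rw [mul_assoc]
      rw [hmul] at hexp
      -- hexp : (φ z 1 - t • φ (z*a*w t) 1) + t • (φ z a - t • φ (z*a*w t) a) = φ z 1
      have ht' : t • φ z a = t • (φ (z * a * w t) 1 + t • φ (z * a * w t) a) := by
        linear_combination (norm := module) hexp
      exact smul_right_injective X ht0 ht'
    have hlim1 : Tendsto (fun t : ℂ => φ (z * a * w t) 1 + t • φ (z * a * w t) a)
        (𝓝[≠] 0) (𝓝 (φ (z * a) 1)) := by
      have hc : Tendsto (fun t : ℂ => z * a * w t) (𝓝 0) (𝓝 (z * a)) := by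
        simpa using (hw0.const_mul (z * a))
      have h1 : Tendsto (fun t : ℂ => φ (z * a * w t) 1) (𝓝 0) (𝓝 (φ (z * a) 1)) :=
        ((φ.flip 1).continuous.tendsto _).comp hc
      have h2 : Tendsto (fun t : ℂ => t • φ (z * a * w t) a) (𝓝 0)
          (𝓝 ((0 : ℂ) • φ (z * a) a)) :=
        tendsto_id.smul (((φ.flip a).continuous.tendsto _).comp hc)
      have := h1.add (by simpa using h2)
      simpa using this.mono_left nhdsWithin_le_nhds
    have claim2 : φ z a = φ (z * a) 1 := by
      have hconst : Tendsto (fun _ : ℂ => φ z a) (𝓝[≠] 0) (𝓝 (φ z a)) := tendsto_const_nhds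
      exact tendsto_nhds_unique (hconst.congr' hfund) hlim1
    refine ⟨claim2, ?_⟩
    -- second identity
    have hfund2 : ∀ᶠ t : ℂ in 𝓝[≠] 0,
        φ (z * a ^ 2 * w t) 1 = φ (z * a * w t) a := by
      filter_upwards [nhdsWithin_le_nhds hu, self_mem_nhdsWithin, hfund]
        with t ht (ht0 : t ≠ 0) heq
      have hw1 : w t = 1 - t • (a * w t) := by
        have h1 : (1 + t • a) * w t = 1 := Ring.mul_inverse_cancel _ ht
        have : w t + t • (a * w t) = 1 := by
          rw [← h1]; rw [add_mul, one_mul, smul_mul_assoc]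
        linear_combination (norm := module) this
      have hzaw : z * a * w t = z * a - t • (z * a ^ 2 * w t) := by
        conv_lhs => rw [hw1]
        rw [mul_sub, mul_one, mul_smul_comm]
        congr 2
        rw [pow_two]
        noncomm_ring
      have hL : φ (z * a * w t) 1 = φ (z * a) 1 - t • φ (z * a ^ 2 * w t) 1 := by
        rw [hzaw, map_sub, map_smul]
        simp
      rw [claim2, hL] at heq
      have ht' : t • φ (z * a ^ 2 * w t) 1 = t • φ (z * a * w t) a := by
        linear_combination (norm := module) heq
      exact smul_right_injective X ht0 ht'
    have hlimL : Tendsto (fun t : ℂ => φ (z * a ^ 2 * w t) 1) (𝓝[≠] 0)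
        (𝓝 (φ (z * a ^ 2) 1)) := by
      have hc : Tendsto (fun t : ℂ => z * a ^ 2 * w t) (𝓝 0) (𝓝 (z * a ^ 2)) := by
        simpa using (hw0.const_mul (z * a ^ 2))
      exact (((φ.flip 1).continuous.tendsto _).comp hc).mono_left nhdsWithin_le_nhds
    have hlimR : Tendsto (fun t : ℂ => φ (z * a * w t) a) (𝓝[≠] 0)
        (𝓝 (φ (z * a) a)) := by
      have hc : Tendsto (fun t : ℂ => z * a * w t) (𝓝 0) (𝓝 (z * a)) := by
        simpa using (hw0.const_mul (z * a))
      exact (((φ.flip a).continuous.tendsto _).comp hc).mono_left nhdsWithin_le_nhds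
    exact (tendsto_nhds_unique (hlimL.congr' hfund2) hlimR).symm
  refine ⟨fun a => (key a).2, fun a => ((key a).1).symm, ?_⟩
  refine ⟨(φ.flip 1).comp (ContinuousLinearMap.mul ℂ A z), ?_⟩
  intro a b
  have hab := (key (a + b)).2
  have ha := (key a).2
  have hb := (key b).2
  have e1 : z * (a + b) = z * a + z * b := by rw [mul_add]
  have e2 : z * (a + b) ^ 2 = z * a ^ 2 + (z * (a * b + b * a) + z * b ^ 2) := by
    noncomm_ring
  rw [e1, e2] at hab
  simp only [map_add, ContinuousLinearMap.add_apply] at hab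
  simp only [ContinuousLinearMap.comp_apply, ContinuousLinearMap.flip_apply,
    ContinuousLinearMap.mul_apply']
  linear_combination (norm := abel) hab - ha - hb
end

section
/- Let $A$ be a unital complex Banach $\star$-algebra, $X$ a complex Banach space, $z \in A$ fixed, and $\phi : A \times A \to X$ a continuous bilinear map such that $\phi(a, b^\star) = \phi(1, z)$ whenever $a b^\star = z$. Then $\phi(a, az) = \phi(1, a^2 z)$ and $\phi(1, az) = \phi(a, z)$ for all $a \in A$, and there exists a continuous linear map $\Phi : A \to X$ such that $\phi(a, bz) + \phi(b, az) = \Phi(ab + ba)$ for all $a, b \in A$. -/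
open Filter Topology

theorem stmt_6 (A X : Type*) [NormedRing A] [NormedAlgebra ℂ A] [CompleteSpace A]
    [StarRing A] [StarModule ℂ A] [ContinuousStar A]
    [NormedAddCommGroup X] [NormedSpace ℂ X] [CompleteSpace X]
    (z : A) (φ : A →L[ℂ] A →L[ℂ] X)
    (h : ∀ a b : A, a * star b = z → φ a (star b) = φ 1 z) :
    (∀ a : A, φ a (a * z) = φ 1 (a ^ 2 * z)) ∧
    (∀ a : A, φ 1 (a * z) = φ a z) ∧
    ∃ Φ : A →L[ℂ] X, ∀ a b : A, φ a (b * z) + φ b (a * z) = Φ (a * b + b * a) := by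
  -- reformulate hypothesis without stars
  have h' : ∀ a c : A, a * c = z → φ a c = φ 1 z := by
    intro a c hac
    have := h a (star c) (by rwa [star_star])
    rwa [star_star] at this
  -- key facts for each a
  have key : ∀ a : A, φ 1 (a * z) = φ a z ∧ φ 1 (a * a * z) = φ a (a * z) := by
    intro a
    set S : ℂ → A := fun t => Ring.inverse (1 - t • a) with hSdef
    have hScont : ContinuousAt S 0 := by
      have h1 : ContinuousAt (fun t : ℂ => 1 - t • a) 0 := by fun_prop
      have h2 : ContinuousAt Ring.inverse ((1 : Aˣ) : A) :=
        NormedRing.inverse_continuousAt (1 : Aˣ)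
      have h0 : (fun t : ℂ => 1 - t • a) 0 = ((1 : Aˣ) : A) := by simp
      exact ContinuousAt.comp (h0 ▸ h2) h1
    have hS0 : S 0 = 1 := by simp [hSdef]
    have hsmall : ∀ᶠ t : ℂ in 𝓝 0, ‖t • a‖ < 1 := by
      have : ContinuousAt (fun t : ℂ => ‖t • a‖) 0 := by fun_prop
      have h0 : (fun t : ℂ => ‖t • a‖) 0 = 0 := by simp
      have := this.eventually_lt_const (by rw [h0]; norm_num : (fun t : ℂ => ‖t • a‖) 0 < 1)
      exact this
    have hunit : ∀ᶠ t : ℂ in 𝓝 0, IsUnit (1 - t • a) := by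
      filter_upwards [hsmall] with t ht
      exact (Units.oneSub (t • a) ht).isUnit
    have hrel : ∀ᶠ t : ℂ in 𝓝 0, S t = 1 + t • (a * S t) := by
      filter_upwards [hunit] with t ht
      have h1 : (1 - t • a) * S t = 1 := Ring.mul_inverse_cancel _ ht
      have : S t - t • (a * S t) = 1 := by
        rw [← h1, sub_mul, one_mul, smul_mul_assoc]
      linear_combination (norm := module) this
    -- aux limit lemma
    have aux : ∀ F G : ℂ → X, ContinuousAt F 0 → ContinuousAt G 0 →
        (∀ᶠ t in 𝓝[≠] (0:ℂ), F t = G t) → F 0 = G 0 := by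
      intro F G hF hG heq
      have hF' : Tendsto F (𝓝[≠] (0:ℂ)) (𝓝 (F 0)) := hF.tendsto.mono_left nhdsWithin_le_nhds
      have hG' : Tendsto G (𝓝[≠] (0:ℂ)) (𝓝 (G 0)) := hG.tendsto.mono_left nhdsWithin_le_nhds
      exact tendsto_nhds_unique (hF'.congr' heq) hG'
    -- first equation
    have hE : ∀ᶠ t in 𝓝[≠] (0:ℂ), φ 1 (a * S t * z) = φ a (S t * z) := by
      filter_upwards [eventually_nhdsWithin_of_eventually_nhds hunit,
        eventually_nhdsWithin_of_eventually_nhds hrel,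
        self_mem_nhdsWithin] with t htu htr (htne : t ≠ 0)
      have hmul : (1 - t • a) * (S t * z) = z := by
        rw [← mul_assoc, Ring.mul_inverse_cancel _ htu, one_mul]
      have h1 := h' _ _ hmul
      have h2 : φ (1 - t • a) (S t * z) = φ 1 (S t * z) - t • φ a (S t * z) := by
        simp [map_sub, map_smul]
      have h3 : φ 1 (S t * z) = φ 1 z + t • φ 1 (a * S t * z) := by
        conv_lhs => rw [htr]
        simp [add_mul, smul_mul_assoc, mul_assoc]
      rw [h2, h3] at h1
      have h4 : t • φ 1 (a * S t * z) - t • φ a (S t * z) = 0 := by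
        linear_combination (norm := module) h1
      rw [← smul_sub] at h4
      rcases smul_eq_zero.mp h4 with h5 | h5
      · exact absurd h5 htne
      · linear_combination (norm := module) h5
    have claim2 : φ 1 (a * z) = φ a z := by
      have hF : ContinuousAt (fun t => φ 1 (a * S t * z)) 0 := by
        exact (φ 1).continuous.continuousAt.comp <| by fun_prop
      have hG : ContinuousAt (fun t => φ a (S t * z)) 0 := by
        exact (φ a).continuous.continuousAt.comp <| by fun_prop
      have := aux _ _ hF hG hE
      simpa [hS0] using this
    have hE2 : ∀ᶠ t in 𝓝[≠] (0:ℂ), φ 1 (a * a * S t * z) = φ a (a * S t * z) := by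
      filter_upwards [hE, eventually_nhdsWithin_of_eventually_nhds hrel,
        self_mem_nhdsWithin] with t ht htr (htne : t ≠ 0)
      have hL : φ 1 (a * S t * z) = φ 1 (a * z) + t • φ 1 (a * a * S t * z) := by
        conv_lhs => rw [htr]
        simp [mul_add, add_mul, mul_smul_comm, smul_mul_assoc, mul_assoc]
      have hR : φ a (S t * z) = φ a z + t • φ a (a * S t * z) := by
        conv_lhs => rw [htr]
        simp [add_mul, smul_mul_assoc, mul_assoc]
      rw [hL, hR, claim2] at ht
      have h4 : t • φ 1 (a * a * S t * z) - t • φ a (a * S t * z) = 0 := by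
        linear_combination (norm := module) ht
      rw [← smul_sub] at h4
      rcases smul_eq_zero.mp h4 with h5 | h5
      · exact absurd h5 htne
      · linear_combination (norm := module) h5
    have claim1 : φ 1 (a * a * z) = φ a (a * z) := by
      have hF : ContinuousAt (fun t => φ 1 (a * a * S t * z)) 0 := by
        exact (φ 1).continuous.continuousAt.comp <| by fun_prop
      have hG : ContinuousAt (fun t => φ a (a * S t * z)) 0 := by
        exact (φ a).continuous.continuousAt.comp <| by fun_prop
      have := aux _ _ hF hG hE2
      simpa [hS0] using this
    exact ⟨claim2, claim1⟩
  refine ⟨fun a => by rw [sq]; exact (key a).2.symm, fun a => (key a).1, ?_⟩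
  refine ⟨(φ 1).comp ((ContinuousLinearMap.mul ℂ A).flip z), fun a b => ?_⟩
  have hab := (key (a + b)).2
  have ha := (key a).2
  have hb := (key b).2
  have hexp : φ (a + b) ((a + b) * z)
      = φ a (a * z) + (φ a (b * z) + φ b (a * z)) + φ b (b * z) := by
    simp only [map_add, add_mul, ContinuousLinearMap.add_apply]
    abel
  have hexp2 : φ 1 ((a + b) * (a + b) * z)
      = φ 1 (a * a * z) + φ 1 ((a * b + b * a) * z) + φ 1 (b * b * z) := by
    simp only [add_mul, mul_add, map_add]
    abel
  rw [hexp2, hexp] at hab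
  simp only [ContinuousLinearMap.comp_apply, ContinuousLinearMap.flip_apply,
    ContinuousLinearMap.mul_apply']
  linear_combination (norm := module) ha + hb - hab
end

section
/- Let $A$ be a unital complex Banach $\star$-algebra, $X$ a complex Banach space, and $\phi : A \times A \to X$ a continuous bilinear map such that $\phi(a, b^\star) = \phi(1, 1)$ whenever $a b^\star = 1$. Then $\phi(a, b) + \phi(b, a) = \phi(ab + ba, 1)$ for all $a, b \in A$. -/
/-!
If `u * v = 1`, then `u * exp (t • c)` and `exp (-(t • c)) * v` again multiply to `1`, so `φ` is
constant along this path; differentiating at `t = 0` gives `φ (u * c) v = φ u (c * v)`. With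
`u = v = 1` this says `φ c 1 = φ 1 c`. Applied to `u = exp (s • a)`, `v = exp (-(s • a))`, `c = b`
and differentiated in `s` at `0`, it gives `φ (a * b) 1 - φ b a = φ a b - φ 1 (b * a)`.
-/

open NormedSpace

theorem ContinuousLinearMap.bilinear_deriv_eq_of_forall_eq {𝕜 E F G : Type*}
    [NontriviallyNormedField 𝕜] [NormedAddCommGroup E] [NormedSpace 𝕜 E]
    [NormedAddCommGroup F] [NormedSpace 𝕜 F] [NormedAddCommGroup G] [NormedSpace 𝕜 G]
    (φ : E →L[𝕜] F →L[𝕜] G) {u₁ u₂ : 𝕜 → E} {v₁ v₂ : 𝕜 → F} {u₁' u₂' : E} {v₁' v₂' : F} {x : 𝕜}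
    (hu₁ : HasDerivAt u₁ u₁' x) (hv₁ : HasDerivAt v₁ v₁' x)
    (hu₂ : HasDerivAt u₂ u₂' x) (hv₂ : HasDerivAt v₂ v₂' x)
    (heq : ∀ t, φ (u₁ t) (v₁ t) = φ (u₂ t) (v₂ t)) :
    φ (u₁ x) v₁' + φ u₁' (v₁ x) = φ (u₂ x) v₂' + φ u₂' (v₂ x) := by
  have h₁ := φ.hasDerivAt_of_bilinear (fun _ => hu₁) (fun _ => hv₁)
  have h₂ := φ.hasDerivAt_of_bilinear (fun _ => hu₂) (fun _ => hv₂)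
  exact h₁.unique (by simpa only [← heq] using h₂)

section
variable {A X : Type*} [NormedRing A] [NormedAlgebra ℂ A] [CompleteSpace A]
  [NormedAddCommGroup X] [NormedSpace ℂ X]

theorem exp_mul_exp_neg (x : A) : exp x * exp (-x) = 1 := by
  have hball : ∀ y : A, y ∈ Metric.eball 0 (expSeries ℂ A).radius := fun y =>
    (expSeries_radius_eq_top ℂ A).symm ▸ edist_lt_top _ _
  rw [← exp_add_of_commute_of_mem_ball (Commute.refl x).neg_right (hball x) (hball _),
    add_neg_cancel, exp_zero]

theorem hasDerivAt_exp_smul_const_zero (x : A) :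
    HasDerivAt (fun t : ℂ => exp (t • x)) x 0 := by
  simpa using hasDerivAt_exp_smul_const (𝕂 := ℂ) x 0

variable {φ : A →L[ℂ] A →L[ℂ] X} (hφ : ∀ u v : A, u * v = 1 → φ u v = φ 1 1)
include hφ

theorem apply_mul_left_eq_apply_mul_right {u v : A} (huv : u * v = 1) (c : A) :
    φ (u * c) v = φ u (c * v) := by
  have hpath : ∀ t : ℂ, u * exp (t • c) * (exp (t • -c) * v) = 1 := fun t => by
    rw [smul_neg, mul_assoc, ← mul_assoc (exp _), exp_mul_exp_neg, one_mul, huv]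
  have := φ.bilinear_deriv_eq_of_forall_eq
    ((hasDerivAt_exp_smul_const_zero c).const_mul u)
    ((hasDerivAt_exp_smul_const_zero (-c)).mul_const v)
    (hasDerivAt_const 0 u) (hasDerivAt_const 0 v)
    (fun t => by rw [hφ _ _ (hpath t), hφ _ _ huv])
  simp only [zero_smul, exp_zero, mul_one, one_mul, neg_mul, map_neg, map_zero, zero_apply,
    add_zero] at this
  linear_combination (norm := abel) this

theorem apply_one_comm (c : A) : φ c 1 = φ 1 c := by
  simpa using apply_mul_left_eq_apply_mul_right hφ (one_mul (1 : A)) c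

theorem apply_add_apply_swap (a b : A) : φ a b + φ b a = φ (a * b + b * a) 1 := by
  have := φ.bilinear_deriv_eq_of_forall_eq
    ((hasDerivAt_exp_smul_const_zero a).mul_const b) (hasDerivAt_exp_smul_const_zero (-a))
    (hasDerivAt_exp_smul_const_zero a) ((hasDerivAt_exp_smul_const_zero (-a)).const_mul b)
    (fun t => apply_mul_left_eq_apply_mul_right hφ
      (by rw [smul_neg, exp_mul_exp_neg]) b)
  simp only [zero_smul, exp_zero, one_mul, mul_one, mul_neg, map_neg] at this
  rw [map_add, add_apply, apply_one_comm hφ (b * a)]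
  linear_combination (norm := abel) -this

end

theorem stmt_7_general (A X : Type*) [NormedRing A] [NormedAlgebra ℂ A] [CompleteSpace A]
    [StarRing A]
    [NormedAddCommGroup X] [NormedSpace ℂ X]
    (φ : A →L[ℂ] A →L[ℂ] X)
    (h : ∀ a b : A, a * star b = 1 → φ a (star b) = φ 1 1) :
    ∀ a b : A, φ a b + φ b a = φ (a * b + b * a) 1 := by
  refine apply_add_apply_swap fun u v huv => ?_
  simpa using h u (star v) (by rwa [star_star])

theorem stmt_7 (A X : Type*) [NormedRing A] [NormedAlgebra ℂ A] [CompleteSpace A]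
    [StarRing A] [StarModule ℂ A] [ContinuousStar A]
    [NormedAddCommGroup X] [NormedSpace ℂ X] [CompleteSpace X]
    (φ : A →L[ℂ] A →L[ℂ] X)
    (h : ∀ a b : A, a * star b = 1 → φ a (star b) = φ 1 1) :
    ∀ a b : A, φ a b + φ b a = φ (a * b + b * a) 1 :=
  stmt_7_general A X φ h
end
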